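/- arXiv:2010.04333 — 2 statements merged into one kernel-verified Lean document; each statement's English description precedes it below -/
import Mathlib

section
/- There exist a constant c > 0 and a threshold n₀ such that for all n ≥ n₀, the number P_n of isomorphism classes of trapezoid graphs on n vertices satisfies log₂ P_n ≥ 3n·log₂ n − 4n·log₂ log₂ n − c·n. -/
/-!
Two trapezoids between the lines `y = 0` and `y = 1` are disjoint exactly when one lies strictly
to the left of the other on both lines. Fix `k ≈ n / log₂ n` and `8k` *probes*: segments joining
a position `p < 2k` on one line to a point left or right of all corners on the other line. Such
a probe meets a trapezoid with corners in `[0, 2k)` iff `p` lies on the correct side of one of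
its four corners. Each of the remaining `n - 8k` vertices gets the trapezoid with corners
`a, a + s` on top and `c, c + t` at the bottom, `a, s, c, t < k`; its neighbourhood among the
probes recovers `(a, s, c, t)`. This gives `k ^ (4 (n - 8k))` distinct labelled trapezoid graphs,
hence at least `k ^ (4 (n - 8k)) / n!` isomorphism classes, and taking logarithms gives the bound.
-/

/-- The setoid on graphs on `Fin n` satisfying a property `P`, identifying isomorphic graphs. -/
def graphIsoSetoid (n : ℕ) (P : SimpleGraph (Fin n) → Prop) :
    Setoid {G : SimpleGraph (Fin n) // P G} where
  r G H := Nonempty (G.val ≃g H.val)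
  iseqv := ⟨fun _ => ⟨SimpleGraph.Iso.refl⟩, fun ⟨e⟩ => ⟨e.symm⟩,
    fun ⟨e⟩ ⟨f⟩ => ⟨e.trans f⟩⟩

/-- The number of isomorphism classes of graphs on `Fin n` satisfying `P`. -/
noncomputable def numIsoClasses (n : ℕ) (P : SimpleGraph (Fin n) → Prop) : ℕ :=
  Nat.card (Quotient (graphIsoSetoid n P))

/-- The trapezoid with corners `(a,1)`, `(b,1)` on the upper line and `(c,0)`, `(d,0)` on the
lower line. -/
def trapezoid (a b c d : ℝ) : Set (ℝ × ℝ) :=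
  convexHull ℝ {((a, 1) : ℝ × ℝ), (b, 1), (c, 0), (d, 0)}

/-- `G` is a trapezoid graph: an intersection graph of trapezoids between two parallel lines. -/
def IsTrapezoidGraph {n : ℕ} (G : SimpleGraph (Fin n)) : Prop :=
  ∃ a b c d : Fin n → ℝ, (∀ v, a v ≤ b v ∧ c v ≤ d v) ∧
    ∀ u v : Fin n, u ≠ v →
      (G.Adj u v ↔
        (trapezoid (a u) (b u) (c u) (d u) ∩ trapezoid (a v) (b v) (c v) (d v)).Nonempty)

open Set Real Filter

section Geometry

variable {a b c d a' b' c' d' : ℝ}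

lemma mem_trapezoid_iff (hab : a ≤ b) (hcd : c ≤ d) {p : ℝ × ℝ} :
    p ∈ trapezoid a b c d ↔
      p.2 ∈ Icc 0 1 ∧ p.1 ∈ Icc (p.2 * a + (1 - p.2) * c) (p.2 * b + (1 - p.2) * d) := by
  refine ⟨fun hp => ?_, fun ⟨hy, hx⟩ => ?_⟩
  · refine convexHull_min (t := {q : ℝ × ℝ | q.2 ∈ Icc 0 1 ∧
      q.1 ∈ Icc (q.2 * a + (1 - q.2) * c) (q.2 * b + (1 - q.2) * d)}) ?_ ?_ hp
    · rintro q (rfl | rfl | rfl | rfl | rfl) <;> simp [hab, hcd]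
    · rintro q ⟨⟨hq₀, hq₁⟩, hql, hqr⟩ r ⟨⟨hr₀, hr₁⟩, hrl, hrr⟩ s t hs ht hst
      obtain rfl : t = 1 - s := by linarith
      simp only [mem_ofPred_eq, mem_Icc, Prod.fst_add, Prod.snd_add, Prod.smul_fst,
        Prod.smul_snd, smul_eq_mul]
      exact ⟨⟨by positivity, by nlinarith⟩, by nlinarith, by nlinarith⟩
  · -- `p` lies on the horizontal segment between the two legs of the trapezoid.
    have hconv : Convex ℝ (trapezoid a b c d) := convex_convexHull ℝ _
    have hleg : ∀ {P Q : ℝ × ℝ}, P ∈ ({(a, 1), (b, 1), (c, 0), (d, 0)} : Set (ℝ × ℝ)) →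
        Q ∈ ({(a, 1), (b, 1), (c, 0), (d, 0)} : Set (ℝ × ℝ)) →
        p.2 • P + (1 - p.2) • Q ∈ trapezoid a b c d := fun hP hQ =>
      hconv (subset_convexHull ℝ _ hP) (subset_convexHull ℝ _ hQ) hy.1 (by linarith [hy.2])
        (by ring)
    have hL := hleg (P := (a, 1)) (Q := (c, 0)) (by simp) (by simp)
    have hR := hleg (P := (b, 1)) (Q := (d, 0)) (by simp) (by simp)
    rw [← segment_eq_Icc (hx.1.trans hx.2)] at hx
    obtain ⟨s, t, hs, ht, hst, hpx⟩ := hx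
    convert hconv hL hR hs ht hst using 1
    ext
    · simp only [Prod.fst_add, Prod.smul_fst, smul_eq_mul, ← hpx]
    · simp only [Prod.snd_add, Prod.smul_snd, smul_eq_mul]
      linear_combination (-p.2) * hst

lemma convex_combo_lt_convex_combo {y α β α' β' : ℝ} (hy : y ∈ Icc (0 : ℝ) 1) (hα : α < α')
    (hβ : β < β') : y * α + (1 - y) * β < y * α' + (1 - y) * β' := by
  rcases hy.1.eq_or_lt with rfl | hy₀
  · simpa using hβ
  · nlinarith [mul_lt_mul_of_pos_left hα hy₀, mul_le_mul_of_nonneg_left hβ.le (sub_nonneg.2 hy.2)]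

lemma exists_mem_Icc_affine_nonneg {f₀ f₁ g₀ g₁ : ℝ} (h₀ : 0 ≤ f₀ + g₀) (h₁ : 0 ≤ f₁ + g₁)
    (hf : 0 ≤ f₀ ∨ 0 ≤ f₁) (hg : 0 ≤ g₀ ∨ 0 ≤ g₁) :
    ∃ y ∈ Icc (0 : ℝ) 1, 0 ≤ y * f₁ + (1 - y) * f₀ ∧ 0 ≤ y * g₁ + (1 - y) * g₀ := by
  by_cases H₀ : 0 ≤ f₀ ∧ 0 ≤ g₀
  · exact ⟨0, by simp, by simpa using H₀⟩
  by_cases H₁ : 0 ≤ f₁ ∧ 0 ≤ g₁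
  · exact ⟨1, by simp, by simpa using H₁⟩
  -- Otherwise `f` changes sign on `[0, 1]`, and at its zero `g ≥ -f = 0`.
  have hsign : f₀ < 0 ∧ 0 ≤ f₁ ∨ f₁ < 0 ∧ 0 ≤ f₀ := by
    rcases hf with hf | hf <;> rcases hg with hg | hg <;> grind
  have hne : f₀ - f₁ ≠ 0 := by rcases hsign with h | h <;> linarith
  set y := f₀ / (f₀ - f₁) with hy
  have hfy : y * f₁ + (1 - y) * f₀ = 0 := by rw [hy]; field_simp; ring
  have hy01 : y ∈ Icc (0 : ℝ) 1 := by
    rcases hsign with h | h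
    · exact ⟨div_nonneg_of_nonpos h.1.le (by linarith),
        (div_le_one_of_neg (by linarith)).2 (by linarith)⟩
    · exact ⟨div_nonneg h.2 (by linarith), (div_le_one (by linarith)).2 (by linarith)⟩
  refine ⟨y, hy01, hfy.ge, ?_⟩
  nlinarith [mul_nonneg hy01.1 h₁, mul_nonneg (sub_nonneg.2 hy01.2) h₀]

theorem trapezoid_inter_nonempty_iff (hab : a ≤ b) (hcd : c ≤ d) (hab' : a' ≤ b')
    (hcd' : c' ≤ d') :
    (trapezoid a b c d ∩ trapezoid a' b' c' d').Nonempty ↔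
      ¬(b < a' ∧ d < c') ∧ ¬(b' < a ∧ d' < c) := by
  simp only [Set.Nonempty, mem_inter_iff, mem_trapezoid_iff hab hcd,
    mem_trapezoid_iff hab' hcd', Prod.exists, mem_Icc]
  constructor
  · rintro ⟨x, y, ⟨⟨hy₀, hy₁⟩, hxl, hxr⟩, -, hxl', hxr'⟩
    constructor <;> rintro ⟨htop, hbot⟩ <;>
      linarith [convex_combo_lt_convex_combo ⟨hy₀, hy₁⟩ htop hbot]
  · rintro ⟨h, h'⟩
    obtain ⟨y, ⟨hy₀, hy₁⟩, hf, hg⟩ := exists_mem_Icc_affine_nonneg (f₀ := d - c') (f₁ := b - a')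
      (g₀ := d' - c) (g₁ := b' - a) (by linarith) (by linarith)
      (by by_contra! H; exact h ⟨by linarith, by linarith⟩)
      (by by_contra! H; exact h' ⟨by linarith, by linarith⟩)
    refine ⟨max (y * a + (1 - y) * c) (y * a' + (1 - y) * c'), y,
      ⟨⟨hy₀, hy₁⟩, le_max_left _ _, max_le ?_ ?_⟩,
      ⟨hy₀, hy₁⟩, le_max_right _ _, max_le ?_ ?_⟩ <;> nlinarith

end Geometry

def trapezoidGraph {ι α : Type*} [LinearOrder α] (a b c d : ι → α) : SimpleGraph ι where
  Adj u v := u ≠ v ∧ ¬(b u < a v ∧ d u < c v) ∧ ¬(b v < a u ∧ d v < c u)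
  symm := ⟨fun _ _ h => ⟨h.1.symm, h.2.2, h.2.1⟩⟩
  loopless := ⟨fun _ h => h.1 rfl⟩

namespace trapezoidGraph

variable {ι α : Type*} [LinearOrder α] {a b c d : ι → α} {u v : ι}

@[simp]
lemma adj_iff : (trapezoidGraph a b c d).Adj u v ↔
    u ≠ v ∧ ¬(b u < a v ∧ d u < c v) ∧ ¬(b v < a u ∧ d v < c u) := Iff.rfl

lemma isTrapezoidGraph_comap {n : ℕ} (f : α → ℝ) (hf : StrictMono f) (hab : ∀ v, a v ≤ b v)
    (hcd : ∀ v, c v ≤ d v) (e : Fin n ↪ ι) :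
    IsTrapezoidGraph ((trapezoidGraph a b c d).comap e) := by
  refine ⟨f ∘ a ∘ e, f ∘ b ∘ e, f ∘ c ∘ e, f ∘ d ∘ e,
    fun v => ⟨hf.monotone (hab _), hf.monotone (hcd _)⟩, fun u v huv => ?_⟩
  simp only [Function.comp_apply]
  rw [trapezoid_inter_nonempty_iff (hf.monotone (hab _)) (hf.monotone (hcd _))
    (hf.monotone (hab _)) (hf.monotone (hcd _))]
  simp [huv, hf.lt_iff_lt]

lemma adj_iff_of_bot_lt (huv : u ≠ v) (h : d u < c v) (hu : c u ≤ d u) (hv : c v ≤ d v) :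
    (trapezoidGraph a b c d).Adj u v ↔ a v ≤ b u := by
  simp only [adj_iff, ne_eq, huv, not_false_eq_true, true_and]
  grind

lemma adj_iff_of_lt_bot (huv : u ≠ v) (h : d v < c u) (hu : c u ≤ d u) (hv : c v ≤ d v) :
    (trapezoidGraph a b c d).Adj u v ↔ a u ≤ b v := by
  rw [SimpleGraph.adj_comm]; exact adj_iff_of_bot_lt huv.symm h hv hu

lemma adj_iff_of_top_lt (huv : u ≠ v) (h : b u < a v) (hu : a u ≤ b u) (hv : a v ≤ b v) :
    (trapezoidGraph a b c d).Adj u v ↔ c v ≤ d u := by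
  simp only [adj_iff, ne_eq, huv, not_false_eq_true, true_and]
  grind

lemma adj_iff_of_lt_top (huv : u ≠ v) (h : b v < a u) (hu : a u ≤ b u) (hv : a v ≤ b v) :
    (trapezoidGraph a b c d).Adj u v ↔ c u ≤ d v := by
  rw [SimpleGraph.adj_comm]; exact adj_iff_of_top_lt huv.symm h hv hu

end trapezoidGraph

/-- Just outside the range `[0, 2k)` of probe positions and coded corners. -/
def sentinel (k : ℕ) (right : Bool) : ℤ := if right then 2 * k else -1

/-- `(onTop, right, p)` is the segment from position `p` on one line to the sentinel on the
other line. -/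
abbrev Probe (k : ℕ) := Bool × Bool × Fin (2 * k)

namespace Probe

variable {k : ℕ}

def top : Probe k → ℤ
  | (onTop, right, p) => if onTop then (p : ℕ) else sentinel k right

def bot : Probe k → ℤ
  | (onTop, right, p) => if onTop then sentinel k right else (p : ℕ)

end Probe

/-- The code `(a, s, c, t)` of a vertex stands for the trapezoid `T(a, a + s, c, c + t)`. -/
abbrev Code (k m : ℕ) := Fin m → Fin k × Fin k × Fin k × Fin k

variable {k m : ℕ}

def codedGraph (w : Code k m) : SimpleGraph (Probe k ⊕ Fin m) :=
  trapezoidGraph (Sum.elim Probe.top fun j => ((w j).1 : ℕ))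
    (Sum.elim Probe.top fun j => ((w j).1 + (w j).2.1 : ℕ))
    (Sum.elim Probe.bot fun j => ((w j).2.2.1 : ℕ))
    (Sum.elim Probe.bot fun j => ((w j).2.2.1 + (w j).2.2.2 : ℕ))

namespace codedGraph

variable (w : Code k m) (j : Fin m) (p : Fin (2 * k))

lemma isTrapezoidGraph_comap {n : ℕ} (e : Fin n ↪ Probe k ⊕ Fin m) :
    IsTrapezoidGraph ((codedGraph w).comap e) :=
  trapezoidGraph.isTrapezoidGraph_comap _ Int.cast_strictMono
    (by rintro (_ | _) <;> simp) (by rintro (_ | _) <;> simp) e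

lemma adj_topLeft :
    (codedGraph w).Adj (.inl (true, false, p)) (.inr j) ↔ (w j).1 ≤ (p : ℕ) := by
  rw [codedGraph, trapezoidGraph.adj_iff_of_bot_lt Sum.inl_ne_inr]
  all_goals simp [Probe.top, Probe.bot, sentinel]
  all_goals omega

lemma adj_topRight :
    (codedGraph w).Adj (.inl (true, true, p)) (.inr j) ↔ (p : ℕ) ≤ (w j).1 + (w j).2.1 := by
  rw [codedGraph, trapezoidGraph.adj_iff_of_lt_bot Sum.inl_ne_inr]
  all_goals simp [Probe.top, Probe.bot, sentinel]
  all_goals omega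

lemma adj_botLeft :
    (codedGraph w).Adj (.inl (false, false, p)) (.inr j) ↔ (w j).2.2.1 ≤ (p : ℕ) := by
  rw [codedGraph, trapezoidGraph.adj_iff_of_top_lt Sum.inl_ne_inr]
  all_goals simp [Probe.top, Probe.bot, sentinel]
  all_goals omega

lemma adj_botRight :
    (codedGraph w).Adj (.inl (false, true, p)) (.inr j) ↔
      (p : ℕ) ≤ (w j).2.2.1 + (w j).2.2.2 := by
  rw [codedGraph, trapezoidGraph.adj_iff_of_lt_top Sum.inl_ne_inr]
  all_goals simp [Probe.top, Probe.bot, sentinel]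
  all_goals omega

end codedGraph

lemma Nat.eq_of_forall_fin_le_iff {N x y : ℕ} (hx : x < N) (hy : y < N)
    (h : ∀ p : Fin N, x ≤ p ↔ y ≤ p) : x = y :=
  le_antisymm ((h ⟨y, hy⟩).2 le_rfl) ((h ⟨x, hx⟩).1 le_rfl)

lemma Nat.eq_of_forall_fin_ge_iff {N x y : ℕ} (hx : x < N) (hy : y < N)
    (h : ∀ p : Fin N, p ≤ x ↔ p ≤ y) : x = y :=
  le_antisymm ((h ⟨x, hx⟩).1 le_rfl) ((h ⟨y, hy⟩).2 le_rfl)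

lemma codedGraph_injective : Function.Injective (codedGraph : Code k m → _) := by
  intro w w' h
  funext j
  have ha : ((w j).1 : ℕ) = (w' j).1 :=
    Nat.eq_of_forall_fin_le_iff (N := 2 * k) (by omega) (by omega) fun p => by
      rw [← codedGraph.adj_topLeft, h, codedGraph.adj_topLeft]
  have hb : ((w j).1 + (w j).2.1 : ℕ) = (w' j).1 + (w' j).2.1 :=
    Nat.eq_of_forall_fin_ge_iff (N := 2 * k) (by omega) (by omega) fun p => by
      rw [← codedGraph.adj_topRight, h, codedGraph.adj_topRight]
  have hc : ((w j).2.2.1 : ℕ) = (w' j).2.2.1 :=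
    Nat.eq_of_forall_fin_le_iff (N := 2 * k) (by omega) (by omega) fun p => by
      rw [← codedGraph.adj_botLeft, h, codedGraph.adj_botLeft]
  have hd : ((w j).2.2.1 + (w j).2.2.2 : ℕ) = (w' j).2.2.1 + (w' j).2.2.2 :=
    Nat.eq_of_forall_fin_ge_iff (N := 2 * k) (by omega) (by omega) fun p => by
      rw [← codedGraph.adj_botRight, h, codedGraph.adj_botRight]
  simp only [Prod.ext_iff, Fin.ext_iff]
  omega

open Nat in
lemma card_le_numIsoClasses_mul_factorial (n : ℕ) (P : SimpleGraph (Fin n) → Prop) :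
    Nat.card {G : SimpleGraph (Fin n) // P G} ≤ numIsoClasses n P * n ! := by
  let s := graphIsoSetoid n P
  have iso (G : {G // P G}) : (Quotient.mk s G).out.val ≃g G.val :=
    (Quotient.mk_out (s := s) G).some
  -- A graph is recovered from its class and an isomorphism from the class representative.
  have hrec : (fun q : Quotient s × Equiv.Perm (Fin n) => q.1.out.val.comap q.2.symm) ∘
      (fun G => (Quotient.mk s G, (iso G).toEquiv)) = Subtype.val :=
    funext fun G => SimpleGraph.Embedding.comap_eq (iso G).symm.toEmbedding
  calc Nat.card {G // P G} ≤ Nat.card (Quotient s × Equiv.Perm (Fin n)) :=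
        Nat.card_le_card_of_injective _ (Function.Injective.of_comp (hrec ▸ Subtype.val_injective))
    _ = numIsoClasses n P * n ! := by rw [Nat.card_prod, Nat.card_perm, Nat.card_fin]; rfl

open Nat in
lemma pow_le_numIsoClasses_mul_factorial {n k : ℕ} (hkn : 8 * k ≤ n) :
    (k ^ 4) ^ (n - 8 * k) ≤ numIsoClasses n IsTrapezoidGraph * n ! := by
  have hcard : Fintype.card (Probe k ⊕ Fin (n - 8 * k)) = n := by simp; omega
  let e := (Fintype.equivFinOfCardEq hcard).symm
  have hinj : Function.Injective fun w : Code k (n - 8 * k) =>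
      (⟨(codedGraph w).comap e, codedGraph.isTrapezoidGraph_comap w e.toEmbedding⟩ :
        {G : SimpleGraph (Fin n) // IsTrapezoidGraph G}) :=
    fun w w' h => codedGraph_injective (e.symm.simpleGraph.injective (congrArg Subtype.val h))
  calc (k ^ 4) ^ (n - 8 * k) = Nat.card (Code k (n - 8 * k)) := by simp; ring
    _ ≤ Nat.card {G : SimpleGraph (Fin n) // IsTrapezoidGraph G} :=
        Nat.card_le_card_of_injective _ hinj
    _ ≤ numIsoClasses n IsTrapezoidGraph * n ! := card_le_numIsoClasses_mul_factorial n _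

lemma le_logb_numIsoClasses {n k : ℕ} (hk : 1 ≤ k) (hkn : 8 * k ≤ n) :
    4 * ((n : ℝ) - 8 * k) * logb 2 k - n * logb 2 n ≤
      logb 2 (numIsoClasses n IsTrapezoidGraph) := by
  set P := numIsoClasses n IsTrapezoidGraph
  have hcount : (k ^ 4) ^ (n - 8 * k) ≤ P * n ^ n :=
    (pow_le_numIsoClasses_mul_factorial hkn).trans (Nat.mul_le_mul_left _ n.factorial_le_pow)
  have hP : P ≠ 0 := by
    rintro hP
    rw [hP, zero_mul, Nat.le_zero] at hcount
    exact pow_ne_zero _ (pow_ne_zero _ (by omega)) hcount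
  have hcountℝ : ((k : ℝ) ^ 4) ^ (n - 8 * k) ≤ P * (n : ℝ) ^ n := by exact_mod_cast hcount
  have hlog := logb_le_logb_of_le one_lt_two (by positivity) hcountℝ
  have hn : (n : ℝ) ≠ 0 := by norm_cast; omega
  rw [logb_pow, logb_pow, logb_mul (by exact_mod_cast hP) (pow_ne_zero _ hn), logb_pow,
    Nat.cast_sub hkn] at hlog
  push_cast at hlog
  linarith

lemma eventually_two_mul_logb_le : ∀ᶠ n : ℕ in atTop, 2 * logb 2 n ≤ n := by
  have hlog := isLittleO_log_id_atTop.bound (c := log 2 / 2) (by positivity)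
  filter_upwards [tendsto_natCast_atTop_atTop.eventually hlog, eventually_ge_atTop 1]
    with n hn hn1
  rw [norm_of_nonneg (log_nonneg (Nat.one_le_cast.2 hn1)), id, norm_of_nonneg (by positivity)]
    at hn
  rw [logb, ← mul_div_assoc, div_le_iff₀ (log_pos one_lt_two)]
  linarith

lemma exists_nat_near_div_logb {n : ℕ} (h8 : 8 ≤ logb 2 n) (h2 : 2 * logb 2 n ≤ n) :
    ∃ k : ℕ, 1 ≤ k ∧ 8 * k ≤ n ∧ k * logb 2 n ≤ n ∧
      logb 2 n - logb 2 (logb 2 n) - 1 ≤ logb 2 k := by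
  set x := logb 2 n
  have hx : 0 < x := by linarith
  have hn : (0 : ℝ) < n := by linarith
  have hdiv : 2 ≤ n / x := by rwa [le_div_iff₀ hx]
  have hk : (⌊n / x⌋₊ : ℝ) ≤ n / x := Nat.floor_le (by positivity)
  have hkx : (⌊n / x⌋₊ : ℝ) * x ≤ n := (le_div_iff₀ hx).1 hk
  refine ⟨⌊n / x⌋₊, Nat.le_floor (by push_cast; linarith), ?_, hkx, ?_⟩
  · have : (8 * ⌊n / x⌋₊ : ℝ) ≤ n := by nlinarith [Nat.cast_nonneg (α := ℝ) ⌊n / x⌋₊]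
    exact_mod_cast this
  · have hlow : n / (2 * x) ≤ ⌊n / x⌋₊ := by
      have := Nat.lt_floor_add_one (n / x)
      rw [mul_comm, ← div_div]
      linarith
    calc x - logb 2 x - 1 = logb 2 (n / (2 * x)) := by
          rw [logb_div hn.ne' (by positivity), logb_mul two_ne_zero hx.ne',
            logb_self_eq_one one_lt_two]
          ring
      _ ≤ logb 2 ⌊n / x⌋₊ := logb_le_logb_of_le one_lt_two (by positivity) hlow

/-- There is a constant `c > 0` such that for all sufficiently large `n`, the number `P_n` of
isomorphism classes of trapezoid graphs on `n` vertices satisfies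
`log₂ P_n ≥ 3 n log₂ n − 4 n log₂ log₂ n − c n`. -/
theorem stmt4 :
    ∃ c : ℝ, 0 < c ∧ ∃ n₀ : ℕ, ∀ n : ℕ, n₀ ≤ n →
      Real.logb 2 (numIsoClasses n IsTrapezoidGraph) ≥
        3 * (n : ℝ) * Real.logb 2 n - 4 * n * Real.logb 2 (Real.logb 2 n) - c * n := by
  refine ⟨36, by norm_num, eventually_atTop.mp ?_⟩
  have hlogb : Tendsto (fun n : ℕ => logb 2 n) atTop atTop :=
    (tendsto_logb_atTop one_lt_two).comp tendsto_natCast_atTop_atTop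
  filter_upwards [hlogb.eventually_ge_atTop 8, eventually_two_mul_logb_le] with n h8 h2
  obtain ⟨k, hk, hkn, hkx, hlogk⟩ := exists_nat_near_div_logb h8 h2
  have hcount := le_logb_numIsoClasses hk hkn
  have hm : (0 : ℝ) ≤ n - 8 * k := by rw [sub_nonneg]; exact_mod_cast hkn
  have hloglog : 0 ≤ logb 2 (logb 2 n) := logb_nonneg one_lt_two (by linarith)
  nlinarith [mul_le_mul_of_nonneg_left hlogk hm, mul_nonneg (Nat.cast_nonneg (α := ℝ) k) hloglog]
end

section
/- Fix a real number ε with 0 < ε < 1/4. For each positive integer n set k_n = ⌈n^{3/4+ε}⌉, ℓ_n = ⌊(n − 2·k_n)/k_n⌋, and N_n = k_n·ℓ_n. Call a permutation σ of Fin N_n bad if there exist i, j ∈ Fin k_n and a 3-element subset T of the block {x : Fin N_n | i·ℓ_n ≤ x < (i+1)·ℓ_n} such that σ '' T ⊆ {x : Fin N_n | j·ℓ_n ≤ x < (j+1)·ℓ_n}. Then the proportion of bad permutations, i.e., (number of bad permutations of Fin N_n) / (N_n !), tends to 0 as n → ∞; equivalently, the proportion of good (non-bad) permutations tends to 1. 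-/
/-!
A uniformly random permutation of an `N`-element set maps a given `t`-set `T` into a set `S`
with probability `(#S).descFactorial t / N.descFactorial t ≤ (#S / N) ^ t`. A union bound over
the `k²` pairs of blocks and the at most `ℓ³` triples in a block bounds the proportion of bad
permutations of `Fin (kℓ)` by `k² ℓ³ (ℓ / kℓ)³ = ℓ³ / k`. As `ℓ ≤ n / k` and `k ≥ n^{3/4+ε}`,
this is at most `n³ / k⁴ ≤ n^{-4ε}`.
-/

/-- `k_n = ⌈n^{3/4+ε}⌉`. -/
noncomputable def specialK (ε : ℝ) (n : ℕ) : ℕ := ⌈(n : ℝ) ^ ((3 : ℝ) / 4 + ε)⌉₊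

/-- `ℓ_n = ⌊(n − 2 k_n)/k_n⌋`. -/
noncomputable def specialL (ε : ℝ) (n : ℕ) : ℕ :=
  ⌊((n : ℝ) - 2 * specialK ε n) / specialK ε n⌋₊

/-- A permutation of `Fin (k·ℓ)` is bad if it maps some 3-element subset of a block
`{x | i·ℓ ≤ x < (i+1)·ℓ}` into a block `{x | j·ℓ ≤ x < (j+1)·ℓ}`. -/
def IsBadPerm (k ℓ : ℕ) (σ : Equiv.Perm (Fin (k * ℓ))) : Prop :=
  ∃ i j : Fin k, ∃ T : Finset (Fin (k * ℓ)), T.card = 3 ∧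
    (∀ x ∈ T, (i : ℕ) * ℓ ≤ (x : ℕ) ∧ (x : ℕ) < ((i : ℕ) + 1) * ℓ) ∧
    (∀ x ∈ T, (j : ℕ) * ℓ ≤ (σ x : ℕ) ∧ (σ x : ℕ) < ((j : ℕ) + 1) * ℓ)

open Finset Equiv Filter Topology

lemma Nat.descFactorial_mul_pow_le {m n : ℕ} (h : m ≤ n) (t : ℕ) :
    m.descFactorial t * n ^ t ≤ m ^ t * n.descFactorial t := by
  induction t with
  | zero => simp
  | succ t ih =>
    have hstep : (m - t) * n ≤ m * (n - t) := by
      rw [Nat.sub_mul, Nat.mul_sub]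
      exact Nat.sub_le_sub_left (by rw [Nat.mul_comm]; exact Nat.mul_le_mul_left t h) _
    calc m.descFactorial (t + 1) * n ^ (t + 1)
        = (m.descFactorial t * n ^ t) * ((m - t) * n) := by
          rw [Nat.descFactorial_succ, pow_succ]; ring
      _ ≤ (m ^ t * n.descFactorial t) * (m * (n - t)) := Nat.mul_le_mul ih hstep
      _ = m ^ (t + 1) * n.descFactorial (t + 1) := by
          rw [Nat.descFactorial_succ, pow_succ]; ring

section PermMapsTo

variable {α : Type*} [Fintype α] [DecidableEq α]

lemma card_perm_fixing (T : Finset α) :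
    #{τ : Perm α | ∀ x ∈ T, τ x = x} = (Fintype.card α - #T).factorial := by
  rw [← Fintype.card_subtype]
  have e : {τ : Perm α // ∀ x ∈ T, τ x = x} ≃ Perm {x : α // x ∉ T} :=
    ((Perm.subtypeEquivSubtypePerm fun x => x ∉ T).trans
      (subtypeEquivRight fun _ => by simp only [not_not])).symm
  rw [Fintype.card_congr e, Fintype.card_perm, Fintype.card_subtype_compl, Fintype.card_coe]

lemma card_perm_mapsTo_le (T S : Finset α) [DecidablePred fun σ : Perm α => ∀ x ∈ T, σ x ∈ S] :
    #{σ : Perm α | ∀ x ∈ T, σ x ∈ S} ≤ (#S).descFactorial #T * (Fintype.card α - #T).factorial := by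
  let restrict (σ : {σ : Perm α // ∀ x ∈ T, σ x ∈ S}) : T ↪ S :=
    ⟨fun x => ⟨σ.1 x, σ.2 x x.2⟩,
      fun x y hxy => Subtype.ext (σ.1.injective (congrArg Subtype.val hxy))⟩
  -- Two permutations with the same restriction to `T` differ by one fixing `T` pointwise.
  have hfiber : ∀ e : T ↪ S, #{σ | restrict σ = e} ≤ (Fintype.card α - #T).factorial := by
    intro e
    rcases Finset.eq_empty_or_nonempty {σ | restrict σ = e} with hempty | ⟨σ₀, hσ₀⟩
    · simp [hempty]
    rw [← card_perm_fixing T]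
    refine Finset.card_le_card_of_injOn (fun σ => σ₀.1⁻¹ * σ.1) (fun σ hσ => ?_)
      (fun σ _ τ _ hστ => Subtype.ext (mul_left_cancel hστ))
    simp only [coe_filter, mem_filter, mem_univ, true_and, Set.mem_ofPred] at hσ hσ₀ ⊢
    intro x hx
    have hagree : σ.1 x = σ₀.1 x :=
      congrArg Subtype.val (DFunLike.congr_fun (hσ.trans hσ₀.symm) ⟨x, hx⟩)
    simp [Perm.mul_apply, hagree]
  rw [← Fintype.card_subtype]
  calc Fintype.card {σ : Perm α // ∀ x ∈ T, σ x ∈ S}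
      ≤ (Fintype.card α - #T).factorial * #(univ : Finset (T ↪ S)) :=
        Finset.card_le_mul_card_image_of_maps_to (fun _ _ => mem_univ _) _ fun e _ => hfiber e
    _ = (#S).descFactorial #T * (Fintype.card α - #T).factorial := by
        rw [card_univ, Fintype.card_embedding_eq, Fintype.card_coe, Fintype.card_coe, mul_comm]

lemma card_perm_mapsTo_div_factorial_le (T S : Finset α)
    [DecidablePred fun σ : Perm α => ∀ x ∈ T, σ x ∈ S] :
    (#{σ : Perm α | ∀ x ∈ T, σ x ∈ S} : ℝ) / (Fintype.card α).factorial
      ≤ ((#S : ℝ) / Fintype.card α) ^ #T := by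
  set N := Fintype.card α
  have hT : #T ≤ N := card_le_univ T
  have hdesc : (0 : ℝ) < N.descFactorial #T := by exact_mod_cast Nat.descFactorial_pos.2 hT
  have hpow : (0 : ℝ) < (N : ℝ) ^ #T :=
    hdesc.trans_le (by exact_mod_cast Nat.descFactorial_le_pow N #T)
  have hcount : (#{σ : Perm α | ∀ x ∈ T, σ x ∈ S} : ℝ)
      ≤ (#S).descFactorial #T * (N - #T).factorial := by
    exact_mod_cast card_perm_mapsTo_le T S
  have hratio : ((#S).descFactorial #T : ℝ) * N ^ #T ≤ (#S : ℝ) ^ #T * N.descFactorial #T := by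
    exact_mod_cast Nat.descFactorial_mul_pow_le (card_le_univ S) #T
  rw [← Nat.factorial_mul_descFactorial hT, div_pow, Nat.cast_mul,
    div_le_div_iff₀ (by positivity) hpow]
  calc (#{σ : Perm α | ∀ x ∈ T, σ x ∈ S} : ℝ) * N ^ #T
      ≤ (#S).descFactorial #T * (N - #T).factorial * N ^ #T := by gcongr
    _ = (N - #T).factorial * ((#S).descFactorial #T * N ^ #T) := by ring
    _ ≤ (N - #T).factorial * ((#S : ℝ) ^ #T * N.descFactorial #T) := by gcongr
    _ = (#S : ℝ) ^ #T * ((N - #T).factorial * N.descFactorial #T) := by ring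

end PermMapsTo

def block (k ℓ : ℕ) (i : Fin k) : Finset (Fin (k * ℓ)) :=
  {x | (i : ℕ) * ℓ ≤ (x : ℕ) ∧ (x : ℕ) < ((i : ℕ) + 1) * ℓ}

lemma card_block_le (k ℓ : ℕ) (i : Fin k) : #(block k ℓ i) ≤ ℓ := by
  calc #(block k ℓ i) ≤ #(Ico ((i : ℕ) * ℓ) (((i : ℕ) + 1) * ℓ)) :=
        card_le_card_of_injOn Fin.val (fun x hx => by simpa [block] using hx)
          Fin.val_injective.injOn
    _ = ℓ := by rw [Nat.card_Ico, add_mul, one_mul, Nat.add_sub_cancel_left]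

lemma isBadPerm_iff (k ℓ : ℕ) (σ : Perm (Fin (k * ℓ))) :
    IsBadPerm k ℓ σ ↔ ∃ p : Fin k × Fin k, ∃ T ∈ (block k ℓ p.1).powersetCard 3,
      ∀ x ∈ T, σ x ∈ block k ℓ p.2 := by
  simp [IsBadPerm, block, Prod.exists, mem_powersetCard, subset_iff, and_comm, and_assoc]

lemma card_isBadPerm_le (k ℓ : ℕ) :
    Nat.card {σ : Perm (Fin (k * ℓ)) // IsBadPerm k ℓ σ}
      ≤ ∑ p : Fin k × Fin k, ∑ T ∈ (block k ℓ p.1).powersetCard 3,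
          #{σ : Perm (Fin (k * ℓ)) | ∀ x ∈ T, σ x ∈ block k ℓ p.2} := by
  classical
  have hbad : ({σ | IsBadPerm k ℓ σ} : Finset (Perm (Fin (k * ℓ)))) =
      (univ : Finset (Fin k × Fin k)).biUnion fun p =>
        ((block k ℓ p.1).powersetCard 3).biUnion
          fun T => {σ : Perm (Fin (k * ℓ)) | ∀ x ∈ T, σ x ∈ block k ℓ p.2} := by
    ext σ
    simp only [mem_filter, mem_univ, true_and, mem_biUnion, isBadPerm_iff]
  rw [Nat.card_eq_fintype_card, Fintype.card_subtype, hbad]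
  exact card_biUnion_le.trans (sum_le_sum fun p _ => card_biUnion_le)

lemma card_isBadPerm_div_factorial_le (k ℓ : ℕ) :
    (Nat.card {σ : Perm (Fin (k * ℓ)) // IsBadPerm k ℓ σ} : ℝ) / (k * ℓ).factorial
      ≤ (ℓ : ℝ) ^ 3 / k := by
  have htriple : ∀ p : Fin k × Fin k, ∀ T ∈ (block k ℓ p.1).powersetCard 3,
      (#{σ : Perm (Fin (k * ℓ)) | ∀ x ∈ T, σ x ∈ block k ℓ p.2} : ℝ) / (k * ℓ).factorial
        ≤ ((ℓ : ℝ) / (k * ℓ : ℕ)) ^ 3 := by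
    intro p T hT
    have h := card_perm_mapsTo_div_factorial_le T (block k ℓ p.2)
    rw [Fintype.card_fin, (mem_powersetCard.1 hT).2] at h
    refine h.trans ?_
    gcongr
    exact_mod_cast card_block_le k ℓ p.2
  have hntriples : ∀ p : Fin k × Fin k, (#((block k ℓ p.1).powersetCard 3) : ℝ) ≤ (ℓ : ℝ) ^ 3 := by
    intro p
    rw [card_powersetCard]
    exact_mod_cast (Nat.choose_le_pow _ 3).trans (Nat.pow_le_pow_left (card_block_le k ℓ p.1) 3)
  calc (Nat.card {σ : Perm (Fin (k * ℓ)) // IsBadPerm k ℓ σ} : ℝ) / (k * ℓ).factorial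
      ≤ ∑ p : Fin k × Fin k, ∑ T ∈ (block k ℓ p.1).powersetCard 3,
          (#{σ : Perm (Fin (k * ℓ)) | ∀ x ∈ T, σ x ∈ block k ℓ p.2} : ℝ) / (k * ℓ).factorial := by
        simp only [← sum_div]
        gcongr
        exact_mod_cast card_isBadPerm_le k ℓ
    _ ≤ ∑ p : Fin k × Fin k, ∑ _T ∈ (block k ℓ p.1).powersetCard 3,
          ((ℓ : ℝ) / (k * ℓ : ℕ)) ^ 3 :=
        sum_le_sum fun p _ => sum_le_sum (htriple p)
    _ ≤ ∑ _p : Fin k × Fin k, (ℓ : ℝ) ^ 3 * ((ℓ : ℝ) / (k * ℓ : ℕ)) ^ 3 := by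
        refine sum_le_sum fun p _ => ?_
        rw [sum_const, nsmul_eq_mul]
        gcongr
        exact hntriples p
    _ = (ℓ : ℝ) ^ 3 / k := by
        rw [sum_const, card_univ, Fintype.card_prod, Fintype.card_fin, nsmul_eq_mul]
        rcases Nat.eq_zero_or_pos k with rfl | hk
        · simp
        rcases Nat.eq_zero_or_pos ℓ with rfl | hℓ
        · simp
        push_cast
        field_simp

lemma specialL_le (ε : ℝ) (n : ℕ) : (specialL ε n : ℝ) ≤ n / specialK ε n := by
  calc (specialL ε n : ℝ) ≤ ⌊(n : ℝ) / specialK ε n⌋₊ := by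
        exact_mod_cast Nat.floor_le_floor
          (by gcongr; linarith [(specialK ε n).cast_nonneg (α := ℝ)])
    _ ≤ n / specialK ε n := Nat.floor_le (by positivity)

lemma specialL_pow_three_div_specialK_le (ε : ℝ) {n : ℕ} (hn : 0 < n) :
    (specialL ε n : ℝ) ^ 3 / specialK ε n ≤ (n : ℝ) ^ (-(4 * ε)) := by
  set k := specialK ε n
  have hn : (0 : ℝ) < n := by exact_mod_cast hn
  have hpow : (n : ℝ) ^ ((3 : ℝ) / 4 + ε) ≤ k := Nat.le_ceil _
  have hk : (0 : ℝ) < k := (Real.rpow_pos_of_pos hn _).trans_le hpow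
  calc (specialL ε n : ℝ) ^ 3 / k ≤ ((n : ℝ) / k) ^ 3 / k := by
        gcongr
        exact specialL_le ε n
    _ = (n : ℝ) ^ 3 / k ^ 4 := by field_simp
    _ ≤ (n : ℝ) ^ 3 / ((n : ℝ) ^ ((3 : ℝ) / 4 + ε)) ^ 4 := by gcongr
    _ = (n : ℝ) ^ (-(4 * ε)) := by
        rw [← Real.rpow_mul_natCast hn.le, ← Real.rpow_natCast, ← Real.rpow_sub hn]
        congr 1
        push_cast
        ring

theorem stmt6_general (ε : ℝ) (hε0 : 0 < ε) :
    Filter.Tendsto (fun n : ℕ =>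
        (Nat.card {σ : Equiv.Perm (Fin (specialK ε n * specialL ε n)) //
            IsBadPerm (specialK ε n) (specialL ε n) σ} : ℝ) /
          (Nat.factorial (specialK ε n * specialL ε n))) Filter.atTop (nhds 0) := by
  have hdecay : Tendsto (fun n : ℕ => (n : ℝ) ^ (-(4 * ε))) atTop (𝓝 0) :=
    (tendsto_rpow_neg_atTop (by linarith)).comp tendsto_natCast_atTop_atTop
  refine squeeze_zero' (Eventually.of_forall fun n => by positivity) ?_ hdecay
  filter_upwards [eventually_gt_atTop 0] with n hn
  exact (card_isBadPerm_div_factorial_le _ _).trans (specialL_pow_three_div_specialK_le ε hn)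

/-- For `0 < ε < 1/4`, with `k_n = ⌈n^{3/4+ε}⌉`, `ℓ_n = ⌊(n − 2k_n)/k_n⌋` and `N_n = k_n ℓ_n`,
the proportion of bad permutations of `Fin N_n` tends to `0` as `n → ∞`. -/
theorem stmt6 (ε : ℝ) (hε0 : 0 < ε) (hε : ε < 1 / 4) :
    Filter.Tendsto (fun n : ℕ =>
        (Nat.card {σ : Equiv.Perm (Fin (specialK ε n * specialL ε n)) //
            IsBadPerm (specialK ε n) (specialL ε n) σ} : ℝ) /
          (Nat.factorial (specialK ε n * specialL ε n))) Filter.atTop (nhds 0) :=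
  stmt6_general ε hε0
end
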